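/- arXiv:1906.08731 — 11 statements merged into one kernel-verified Lean document; each statement's English description precedes it below -/
import Mathlib

section
/- Let Σ be a nonempty type and F : Σ → Σ → Prop. The hyperproperty φ_F is NOT (semantically, black-box) monitorable if and only if F is non-reflexive (there exists v with ¬ F v v) and serial (for every v there exists v' with F v v'). Equivalently: φ_F is monitorable iff F is reflexive or F is not serial. -/
/-- A finite trace `u` is a prefix of an infinite trace `t`. -/
def PrefixOf {σ : Type*} (u : List σ) (t : ℕ → σ) : Prop :=
  ∀ i (h : i < u.length), u.get ⟨i, h⟩ = t i

/-- An observation `O` extends to a set `B` of infinite traces. -/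
def ExtendsTo {σ : Type*} (O : Finset (List σ)) (B : Set (ℕ → σ)) : Prop :=
  ∀ u ∈ O, ∃ t ∈ B, PrefixOf u t

/-- An observation `P` extends an observation `O`. -/
def ObsExtends {σ : Type*} (O P : Finset (List σ)) : Prop :=
  ∀ u ∈ O, ∃ v ∈ P, u <+: v

/-- A set `T` of infinite traces satisfies the hyperproperty `φ_F`. -/
def PhiSat {σ : Type*} (F : σ → σ → Prop) (T : Set (ℕ → σ)) : Prop :=
  ∀ t ∈ T, ∃ t' ∈ T, ∀ i, F (t i) (t' i)

/-- `O` permanently satisfies `φ_F`. -/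
def PermSat {σ : Type*} (F : σ → σ → Prop) (O : Finset (List σ)) : Prop :=
  ∀ B : Set (ℕ → σ), ExtendsTo O B → PhiSat F B

/-- `O` permanently violates `φ_F`. -/
def PermViol {σ : Type*} (F : σ → σ → Prop) (O : Finset (List σ)) : Prop :=
  ∀ B : Set (ℕ → σ), ExtendsTo O B → ¬ PhiSat F B

/-- `φ_F` is (semantically, black-box) monitorable. -/
def Monitorable {σ : Type*} (F : σ → σ → Prop) : Prop :=
  ∀ O : Finset (List σ), ∃ P : Finset (List σ),
    ObsExtends O P ∧ (PermSat F P ∨ PermViol F P)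

theorem nonmonitorable_iff_nonreflexive_and_serial {σ : Type*} [Nonempty σ]
    (F : σ → σ → Prop) :
    ¬ Monitorable F ↔ ((∃ v, ¬ F v v) ∧ (∀ v, ∃ v', F v v')) := by
  constructor
  · intro hnm
    by_contra h
    apply hnm
    rw [not_and_or] at h
    rcases h with h | h
    · push_neg at h
      intro O
      exact ⟨O, fun u hu => ⟨u, hu, List.prefix_refl u⟩,
        Or.inl (fun B _ t ht => ⟨t, ht, fun i => h _⟩)⟩
    · push_neg at h
      obtain ⟨v, hv⟩ := h
      intro O
      classical
      refine ⟨insert [v] O, fun u hu => ⟨u, Finset.mem_insert_of_mem hu, List.prefix_refl u⟩,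
        Or.inr ?_⟩
      intro B hB hsat
      obtain ⟨t, ht, hpre⟩ := hB [v] (Finset.mem_insert_self _ _)
      obtain ⟨t', ht', hF⟩ := hsat t ht
      have h0 : t 0 = v := (hpre 0 (by simp)).symm
      exact hv (t' 0) (h0 ▸ hF 0)
  · rintro ⟨⟨v₀, hv₀⟩, hser⟩ hm
    obtain ⟨P, _, hP⟩ := hm ∅
    rcases hP with hs | hviol
    · have hext : ExtendsTo P {t | ∃ N, ∀ i ≥ N, t i = v₀} := by
        intro u hu
        refine ⟨fun i => if h : i < u.length then u.get ⟨i, h⟩ else v₀,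
          ⟨u.length, fun i hi => ?_⟩, fun i hi => ?_⟩
        · simp [Nat.not_lt.mpr hi]
        · simp [hi]
      obtain ⟨t', ⟨N, hN⟩, hF⟩ := hs _ hext (fun _ => v₀) ⟨0, fun i _ => rfl⟩
      exact hv₀ (by have := hF N; rwa [hN N le_rfl] at this)
    · have hext : ExtendsTo P Set.univ := by
        intro u hu
        refine ⟨fun i => if h : i < u.length then u.get ⟨i, h⟩ else Classical.arbitrary σ,
          trivial, fun i hi => ?_⟩
        simp [hi]
      exact hviol Set.univ hext (fun t _ =>
        ⟨fun i => Classical.choose (hser (t i)), trivial,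
          fun i => Classical.choose_spec (hser (t i))⟩)
end

section
/- Let Σ be a nonempty type and F : Σ → Σ → Prop. If F is serial, then the set of all infinite traces (the full set ℕ → Σ) satisfies φ_F; consequently, no observation permanently violates φ_F. -/
theorem serial_univ_sat_and_no_perm_violation {σ : Type*} [Nonempty σ]
    (F : σ → σ → Prop) (hser : ∀ v : σ, ∃ v', F v v') :
    PhiSat F (Set.univ : Set (ℕ → σ)) ∧
      ∀ O : Finset (List σ), ¬ PermViol F O := by
  have hsat : PhiSat F (Set.univ : Set (ℕ → σ)) := by
    intro t _
    refine ⟨fun i => Classical.choose (hser (t i)), Set.mem_univ _, fun i =>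
      Classical.choose_spec (hser (t i))⟩
  refine ⟨hsat, fun O hviol => ?_⟩
  refine hviol Set.univ ?_ hsat
  intro u _
  refine ⟨fun i => if h : i < u.length then u.get ⟨i, h⟩ else Classical.arbitrary σ,
    Set.mem_univ _, fun i h => by simp [h]⟩
end

section
/- Let Σ be a type and F : Σ → Σ → Prop. If F is non-reflexive (there exists v : Σ with ¬ F v v), then no observation permanently satisfies φ_F: every observation O has a set B of infinite traces with O ⪯ B such that B does not satisfy φ_F. -/
theorem nonreflexive_no_perm_satisfaction {σ : Type*}
    (F : σ → σ → Prop) (hnrefl : ∃ v : σ, ¬ F v v) :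
    ∀ O : Finset (List σ), ∃ B : Set (ℕ → σ), ExtendsTo O B ∧ ¬ PhiSat F B := by
  obtain ⟨v, hv⟩ := hnrefl
  intro O
  refine ⟨{t | ∃ N, ∀ i, N ≤ i → t i = v}, ?_, ?_⟩
  · intro u _
    refine ⟨fun i => if h : i < u.length then u.get ⟨i, h⟩ else v, ⟨u.length, ?_⟩, ?_⟩
    · intro i hi
      simp [Nat.not_lt.mpr hi]
    · intro i h
      simp [h]
  · intro hsat
    obtain ⟨t', ⟨N, hN⟩, hF⟩ := hsat (fun _ => v) ⟨0, fun _ _ => rfl⟩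
    have := hF N
    rw [hN N le_rfl] at this
    exact hv this
end

section
/- Assume every component type I k has at least two elements, and the output type O is finite with at least two elements. Then φ_dm is semantically black-box monitorable — that is, every finite set U ⊆ In × O has a finite set V with U ⊆ V ⊆ In × O such that V permanently satisfies φ_dm or V permanently violates φ_dm (in the black-box setting) — if and only if the input type In is finite. -/
/-- A set `T` of input/output traces satisfies the distributed-data-minimality
hyperproperty `φ_dm`. -/
def PhiDM {n : ℕ} {I : Fin n → Type*} {O : Type*}
    (T : Set ((∀ k, I k) × O)) : Prop :=
  ∀ i : Fin n, ∀ u ∈ T, ∀ u' ∈ T, u.1 i ≠ u'.1 i →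
    ∃ v ∈ T, ∃ v' ∈ T, v.1 i = u.1 i ∧ v'.1 i = u'.1 i ∧
      (∀ k, k ≠ i → v.1 k = v'.1 k) ∧ v.2 ≠ v'.2

/-- The function `f` is distributed data-minimal (DDM). -/
def DDM {n : ℕ} {I : Fin n → Type*} {O : Type*}
    (f : (∀ k, I k) → O) : Prop :=
  ∀ i : Fin n, ∀ x y : I i, x ≠ y →
    ∃ z : ∀ k, I k, f (Function.update z i x) ≠ f (Function.update z i y)

/-- The graph of `f`: the set of its valid input/output pairs. -/
def graphOf {n : ℕ} {I : Fin n → Type*} {O : Type*}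
    (f : (∀ k, I k) → O) : Set ((∀ k, I k) × O) :=
  {p | p.2 = f p.1}

/-!
If the input space is finite, the set of all traces is a finite monitor that decides `φ_dm` once
and for all. Conversely, the full trace set satisfies `φ_dm`, so no finite set permanently
violates it; and if the inputs are infinite, some coordinate `i` has infinitely many values, so
any finite `V` can be extended by two traces with a common output whose `i`-th inputs occur
nowhere in `V`. These two traces are then the only witnesses for their own `i`-th inputs, so
the extension violates `φ_dm`.
-/

section

open Set Function

variable {n : ℕ} {I : Fin n → Type*} {O : Type*}

lemma phiDM_univ [Nontrivial O] : PhiDM (univ : Set ((∀ k, I k) × O)) := by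
  intro i u _ u' _ _
  obtain ⟨o', ho'⟩ := exists_ne u.2
  refine ⟨u, trivial, (update u.1 i (u'.1 i), o'), trivial, rfl, by simp, ?_, ho'.symm⟩
  intro k hk
  simp [update_of_ne hk]

lemma not_phiDM_insert_insert {V : Set ((∀ k, I k) × O)} {i : Fin n} {u u' : (∀ k, I k) × O}
    (hne : u.1 i ≠ u'.1 i) (hout : u.2 = u'.2)
    (hu : u.1 i ∉ (fun p ↦ p.1 i) '' V) (hu' : u'.1 i ∉ (fun p ↦ p.1 i) '' V) :
    ¬ PhiDM (insert u (insert u' V)) := by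
  intro hphi
  obtain ⟨v, hv, v', hv', hvi, hv'i, -, hvv'⟩ :=
    hphi i u (mem_insert _ _) u' (mem_insert_of_mem _ (mem_insert _ _)) hne
  have hvu : v = u := by
    rcases hv with rfl | rfl | hvV
    · rfl
    · exact absurd hvi.symm hne
    · exact absurd ⟨v, hvV, hvi⟩ hu
  have hv'u' : v' = u' := by
    rcases hv' with rfl | rfl | hv'V
    · exact absurd hv'i hne
    · rfl
    · exact absurd ⟨v', hv'V, hv'i⟩ hu'
  exact hvv' (hvu ▸ hv'u' ▸ hout)

lemma exists_infinite_of_infinite_pi [Infinite (∀ k, I k)] : ∃ i, Infinite (I i) := by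
  by_contra! h
  have : ∀ k, Finite (I k) := h
  exact not_finite (∀ k, I k)

lemma exists_superset_not_phiDM [Infinite (∀ k, I k)] [Nonempty O]
    {V : Set ((∀ k, I k) × O)} (hV : V.Finite) : ∃ B, V ⊆ B ∧ ¬ PhiDM B := by
  obtain ⟨i, _⟩ := exists_infinite_of_infinite_pi (I := I)
  obtain ⟨x, hx, y, hy, hxy⟩ := (hV.image fun p ↦ p.1 i).infinite_compl.nontrivial
  obtain ⟨z⟩ : Nonempty (∀ k, I k) := inferInstance
  obtain ⟨o⟩ := ‹Nonempty O›
  refine ⟨insert (update z i x, o) (insert (update z i y, o) V),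
    (subset_insert _ _).trans (subset_insert _ _), ?_⟩
  exact not_phiDM_insert_insert (i := i) (u := (update z i x, o)) (u' := (update z i y, o))
    (by simpa using hxy) rfl (by simpa using hx) (by simpa using hy)

end

theorem ddm_blackbox_monitorable_iff_finite_input_general
    {n : ℕ} {I : Fin n → Type*} {O : Type*} [Finite O]
    (hO : ∃ o o' : O, o ≠ o') :
    (∀ U : Set ((∀ k, I k) × O), U.Finite →
      ∃ V : Set ((∀ k, I k) × O), U ⊆ V ∧ V.Finite ∧
        ((∀ B : Set ((∀ k, I k) × O), V ⊆ B → PhiDM B) ∨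
         (∀ B : Set ((∀ k, I k) × O), V ⊆ B → ¬ PhiDM B)))
    ↔ Finite (∀ k, I k) := by
  obtain ⟨o, o', hoo'⟩ := hO
  have : Nontrivial O := ⟨o, o', hoo'⟩
  constructor
  · intro hmon
    by_contra hfin
    have : Infinite (∀ k, I k) := not_finite_iff_infinite.mp hfin
    obtain ⟨V, -, hV, hsat | hviol⟩ := hmon ∅ Set.finite_empty
    · obtain ⟨B, hVB, hB⟩ := exists_superset_not_phiDM hV
      exact hB (hsat B hVB)
    · exact hviol Set.univ (Set.subset_univ V) phiDM_univ
  · intro hfin U _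
    refine ⟨Set.univ, Set.subset_univ U, Set.finite_univ, ?_⟩
    simp only [Set.univ_subset_iff, forall_eq]
    exact em _

theorem ddm_blackbox_monitorable_iff_finite_input
    {n : ℕ} {I : Fin n → Type*} {O : Type*} [Finite O]
    (hn : 1 ≤ n) (hI : ∀ k : Fin n, ∃ x y : I k, x ≠ y)
    (hO : ∃ o o' : O, o ≠ o') :
    (∀ U : Set ((∀ k, I k) × O), U.Finite →
      ∃ V : Set ((∀ k, I k) × O), U ⊆ V ∧ V.Finite ∧
        ((∀ B : Set ((∀ k, I k) × O), V ⊆ B → PhiDM B) ∨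
         (∀ B : Set ((∀ k, I k) × O), V ⊆ B → ¬ PhiDM B)))
    ↔ Finite (∀ k, I k) :=
  ddm_blackbox_monitorable_iff_finite_input_general hO
end

section
/- Assume the input type In is nonempty and the output type O has two distinct elements. Then the full set In × O satisfies φ_dm; consequently, in the black-box setting no finite set U ⊆ In × O permanently violates φ_dm. -/
theorem univ_sat_phidm_and_no_blackbox_perm_violation
    {n : ℕ} {I : Fin n → Type*} {O : Type*}
    (hn : 1 ≤ n) [Nonempty (∀ k, I k)] (hO : ∃ o o' : O, o ≠ o') :
    PhiDM (Set.univ : Set ((∀ k, I k) × O)) ∧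
      ∀ U : Set ((∀ k, I k) × O), U.Finite →
        ¬ (∀ B : Set ((∀ k, I k) × O), U ⊆ B → ¬ PhiDM B) := by
  obtain ⟨o, o', hoo⟩ := hO
  have huniv : PhiDM (Set.univ : Set ((∀ k, I k) × O)) := by
    intro i u _ u' _ hne
    refine ⟨(Function.update u'.1 i (u.1 i), o), trivial,
      (u'.1, o'), trivial, ?_, rfl, ?_, hoo⟩
    · simp
    · intro k hk
      simp [Function.update_of_ne hk]
  exact ⟨huniv, fun U _ h => h Set.univ (Set.subset_univ U) huniv⟩
end

section
/- Assume n ≥ 2 and every component type I k has at least two elements, and let f : In → O. Then φ_dm is semantically gray-box monitorable in Sys f — that is, every finite U ⊆ graph f has a finite V with U ⊆ V ⊆ graph f such that V permanently satisfies φ_dm in Sys f or V permanently violates φ_dm in Sys f — if and only if f is NOT distributed data-minimal or the input type In is finite. -/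
/-!
If `f` is DDM its whole graph satisfies `φ_dm`, so nothing is permanently violated. If moreover
the inputs are infinite, some coordinate `j` takes infinitely many values, and any finite `V` can
be extended by two traces with fresh, distinct `j`-values that also differ at some `i ≠ j`: for
`j` these two can only be matched with each other, and they do not agree off `j`, so `φ_dm` fails.
Conversely, if `f` never separates two values `x ≠ y` of a coordinate `i`, any two traces with
`i`-values `x` and `y` permanently violate `φ_dm`; and a finite graph is itself a finite verdict.
-/

open Function

section

variable {n : ℕ} {I : Fin n → Type*} {O : Type*}

def PermanentlySatisfies (f : (∀ k, I k) → O) (V : Set ((∀ k, I k) × O)) : Prop :=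
  ∀ B, V ⊆ B → B ⊆ graphOf f → PhiDM B

def PermanentlyViolates (f : (∀ k, I k) → O) (V : Set ((∀ k, I k) × O)) : Prop :=
  ∀ B, V ⊆ B → B ⊆ graphOf f → ¬ PhiDM B

variable {f : (∀ k, I k) → O}

theorem PermanentlyViolates.mono {V W : Set ((∀ k, I k) × O)} (hVW : V ⊆ W)
    (hV : PermanentlyViolates f V) : PermanentlyViolates f W :=
  fun B hWB hB => hV B (hVW.trans hWB) hB

theorem permanentlySatisfies_graphOf_or_permanentlyViolates_graphOf (f : (∀ k, I k) → O) :
    PermanentlySatisfies f (graphOf f) ∨ PermanentlyViolates f (graphOf f) := by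
  by_cases h : PhiDM (graphOf f)
  · exact .inl fun B hgB hBg => (hBg.antisymm hgB).symm ▸ h
  · exact .inr fun B hgB hBg => (hBg.antisymm hgB).symm ▸ h

theorem graphOf_finite [Finite (∀ k, I k)] (f : (∀ k, I k) → O) : (graphOf f).Finite :=
  (Set.finite_range fun x => (x, f x)).subset
    fun p (hp : p.2 = f p.1) => ⟨p.1, Prod.ext rfl hp.symm⟩

theorem phiDM_graphOf (hf : DDM f) : PhiDM (graphOf f) := by
  intro i u _ u' _ hne
  obtain ⟨z, hz⟩ := hf i (u.1 i) (u'.1 i) hne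
  refine ⟨(update z i (u.1 i), f _), rfl, (update z i (u'.1 i), f _), rfl,
    by simp, by simp, fun k hk => ?_, hz⟩
  simp [update_of_ne hk]

theorem not_permanentlyViolates_of_ddm (hf : DDM f) {V : Set ((∀ k, I k) × O)}
    (hV : V ⊆ graphOf f) : ¬ PermanentlyViolates f V :=
  fun h => h _ hV subset_rfl (phiDM_graphOf hf)

theorem not_phiDM_of_forall_update_eq {B : Set ((∀ k, I k) × O)} (hB : B ⊆ graphOf f)
    {i : Fin n} {x y : I i} (hxy : x ≠ y) (hf : ∀ z, f (update z i x) = f (update z i y))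
    {u u' : (∀ k, I k) × O} (hu : u ∈ B) (hu' : u' ∈ B) (hux : u.1 i = x) (hu'y : u'.1 i = y) :
    ¬ PhiDM B := by
  intro hφ
  obtain ⟨v, hv, v', hv', hvi, hv'i, hvv', hne⟩ := hφ i u hu u' hu' (hux ▸ hu'y ▸ hxy)
  have hv_eq : update v.1 i x = v.1 := by rw [← hux, ← hvi, update_eq_self]
  have hv'_eq : v'.1 = update v.1 i y := by
    funext k
    by_cases hk : k = i
    · subst hk
      simp [hv'i, hu'y]
    · simp [update_of_ne hk, hvv' k hk]
  have hfv : v.2 = f v.1 := hB hv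
  have hfv' : v'.2 = f v'.1 := hB hv'
  exact hne (by rw [hfv, hfv', hv'_eq, ← hf, hv_eq])

theorem exists_finite_permanentlyViolates_of_not_ddm (z : ∀ k, I k) (hf : ¬ DDM f) :
    ∃ V ⊆ graphOf f, V.Finite ∧ PermanentlyViolates f V := by
  unfold DDM at hf
  push Not at hf
  obtain ⟨i, x, y, hxy, hf⟩ := hf
  let a := update z i x
  let b := update z i y
  refine ⟨{(a, f a), (b, f b)}, ?_, by simp, fun B hVB hB => ?_⟩
  · rintro p (rfl | rfl) <;> rfl
  · exact not_phiDM_of_forall_update_eq hB hxy hf (u := (a, f a)) (u' := (b, f b))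
      (hVB (by simp)) (hVB (by simp)) (by simp [a]) (by simp [b])

theorem not_phiDM_insert_insert_s9 {T : Set ((∀ k, I k) × O)} {i j : Fin n} (hij : i ≠ j)
    {a b : (∀ k, I k) × O} (ha : ∀ p ∈ T, p.1 j ≠ a.1 j) (hb : ∀ p ∈ T, p.1 j ≠ b.1 j)
    (hab_j : a.1 j ≠ b.1 j) (hab_i : a.1 i ≠ b.1 i) : ¬ PhiDM (insert a (insert b T)) := by
  intro hφ
  obtain ⟨v, hv, v', hv', hvj, hv'j, hvv', -⟩ := hφ j a (by simp) b (by simp) hab_j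
  have hva : v = a := by
    rcases hv with rfl | rfl | hv
    · rfl
    · exact absurd hvj.symm hab_j
    · exact absurd hvj (ha v hv)
  have hv'b : v' = b := by
    rcases hv' with rfl | rfl | hv'
    · exact absurd hv'j hab_j
    · rfl
    · exact absurd hv'j (hb v' hv')
  exact hab_i (hva ▸ hv'b ▸ hvv' i hij)

theorem not_permanentlySatisfies_of_infinite (hn : 2 ≤ n) (hI : ∀ k, ∃ x y : I k, x ≠ y)
    [Infinite (∀ k, I k)] {V : Set ((∀ k, I k) × O)} (hVfin : V.Finite) (hV : V ⊆ graphOf f) :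
    ¬ PermanentlySatisfies f V := by
  obtain ⟨j, hj⟩ : ∃ j, Infinite (I j) := by
    by_contra! h
    exact not_finite (∀ k, I k)
  obtain ⟨x, hx, y, hy, hxy⟩ := (hVfin.image fun p => p.1 j).infinite_compl.nontrivial
  have : Nontrivial (Fin n) := Fin.nontrivial_iff_two_le.mpr hn
  obtain ⟨i, hij⟩ := exists_ne j
  obtain ⟨x', y', hxy'⟩ := hI i
  obtain ⟨z⟩ : Nonempty (∀ k, I k) := inferInstance
  let a := update (update z j x) i x'
  let b := update (update z j y) i y'
  have haj : a j = x := by simp [a, update_of_ne hij.symm]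
  have hbj : b j = y := by simp [b, update_of_ne hij.symm]
  have hB : insert (a, f a) (insert (b, f b) V) ⊆ graphOf f := by
    rintro p (rfl | rfl | hp)
    exacts [rfl, rfl, hV hp]
  intro hsat
  exact not_phiDM_insert_insert_s9 (a := (a, f a)) (b := (b, f b)) hij
    (fun p hp hpa => hx ⟨p, hp, hpa.trans haj⟩) (fun p hp hpb => hy ⟨p, hp, hpb.trans hbj⟩)
    (by simpa [haj, hbj]) (by simpa [a, b])
    (hsat _ ((Set.subset_insert _ _).trans (Set.subset_insert _ _)) hB)

end

theorem ddm_graybox_monitorable_iff_nonminimal_or_finite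
    {n : ℕ} {I : Fin n → Type*} {O : Type*}
    (hn : 2 ≤ n) (hI : ∀ k : Fin n, ∃ x y : I k, x ≠ y)
    (f : (∀ k, I k) → O) :
    (∀ U : Set ((∀ k, I k) × O), U.Finite → U ⊆ graphOf f →
      ∃ V : Set ((∀ k, I k) × O), U ⊆ V ∧ V ⊆ graphOf f ∧ V.Finite ∧
        ((∀ B : Set ((∀ k, I k) × O), V ⊆ B → B ⊆ graphOf f → PhiDM B) ∨
         (∀ B : Set ((∀ k, I k) × O), V ⊆ B → B ⊆ graphOf f → ¬ PhiDM B)))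
    ↔ (¬ DDM f ∨ Finite (∀ k, I k)) := by
  constructor
  · intro hmon
    by_contra! h
    obtain ⟨hf, _⟩ := h
    obtain ⟨V, -, hV, hVfin, hsat | hviol⟩ := hmon ∅ Set.finite_empty (Set.empty_subset _)
    · exact not_permanentlySatisfies_of_infinite hn hI hVfin hV hsat
    · exact not_permanentlyViolates_of_ddm hf hV hviol
  · rintro (hf | hfin) U hUfin hU
    · choose z _ using hI
      obtain ⟨V, hV, hVfin, hviol⟩ := exists_finite_permanentlyViolates_of_not_ddm z hf
      exact ⟨U ∪ V, Set.subset_union_left, Set.union_subset hU hV, hUfin.union hVfin,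
        .inr (hviol.mono Set.subset_union_right)⟩
    · exact ⟨graphOf f, hU, subset_rfl, graphOf_finite f,
        permanentlySatisfies_graphOf_or_permanentlyViolates_graphOf f⟩
end

section
/- Assume the input type In is nonempty and f : In → O is NOT distributed data-minimal. Then φ_dm is semantically gray-box monitorable for violation in Sys f: every finite U ⊆ graph f has a finite V with U ⊆ V ⊆ graph f such that V permanently violates φ_dmในSys f, i.e., every B with V ⊆ B ⊆ graph f fails φ_dm. -/
theorem non_ddm_graybox_monitorable_for_violation
    {n : ℕ} {I : Fin n → Type*} {O : Type*}
    (hn : 1 ≤ n) [Nonempty (∀ k, I k)]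
    (f : (∀ k, I k) → O) (hf : ¬ DDM f) :
    ∀ U : Set ((∀ k, I k) × O), U.Finite → U ⊆ graphOf f →
      ∃ V : Set ((∀ k, I k) × O), U ⊆ V ∧ V ⊆ graphOf f ∧ V.Finite ∧
        (∀ B : Set ((∀ k, I k) × O), V ⊆ B → B ⊆ graphOf f → ¬ PhiDM B) := by
  intro U hUfin hUsub
  simp only [DDM, not_forall] at hf
  obtain ⟨i, x, y, hxy, hz⟩ := hf
  push_neg at hz
  obtain ⟨z₀⟩ := ‹Nonempty (∀ k, I k)›
  set a : (∀ k, I k) × O := (Function.update z₀ i x, f (Function.update z₀ i x))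
  set b : (∀ k, I k) × O := (Function.update z₀ i y, f (Function.update z₀ i y))
  refine ⟨U ∪ {a, b}, Set.subset_union_left, ?_, hUfin.union ((Set.finite_singleton b).insert a), ?_⟩
  · intro p hp
    rcases hp with hp | hp
    · exact hUsub hp
    · rcases hp with rfl | rfl <;> rfl
  · intro B hVB hBg hphi
    have ha : a ∈ B := hVB (Or.inr (Or.inl rfl))
    have hb : b ∈ B := hVB (Or.inr (Or.inr rfl))
    have hne : a.1 i ≠ b.1 i := by
      simpa [a, b, Function.update_self] using hxy
    obtain ⟨v, hv, v', hv', hvi, hv'i, hoff, hvne⟩ := hphi i a ha b hb hne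
    have hv2 : v.2 = f v.1 := hBg hv
    have hv'2 : v'.2 = f v'.1 := hBg hv'
    have hvx : v.1 i = x := by simpa [a, Function.update_self] using hvi
    have hv'y : v'.1 i = y := by simpa [b, Function.update_self] using hv'i
    have h1 : Function.update v.1 i x = v.1 := by
      rw [← hvx]; exact Function.update_eq_self i v.1
    have h2 : Function.update v.1 i y = v'.1 := by
      funext k
      by_cases hk : k = i
      · subst hk; simp [hv'y]
      · simp [Function.update_of_ne hk, hoff k hk]
    have := hz v.1
    rw [h1, h2, ← hv2, ← hv'2] at this
    exact hvne this
end

section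
/- Assume the input type In is nonempty and let f : In → O. The graph of f satisfies φ_dm if and only if f is distributed data-minimal. -/
theorem graph_sat_phidm_iff_ddm
    {n : ℕ} {I : Fin n → Type*} {O : Type*}
    (hn : 1 ≤ n) [Nonempty (∀ k, I k)] (f : (∀ k, I k) → O) :
    PhiDM (graphOf f) ↔ DDM f := by
  constructor
  · intro h i x y hxy
    obtain ⟨z0⟩ := ‹Nonempty (∀ k, I k)›
    have hu : (Function.update z0 i x, f (Function.update z0 i x)) ∈ graphOf f := rfl
    have hu' : (Function.update z0 i y, f (Function.update z0 i y)) ∈ graphOf f := rfl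
    have hne : Function.update z0 i x i ≠ Function.update z0 i y i := by
      simpa using hxy
    obtain ⟨v, hv, v', hv', h1, h2, h3, h4⟩ := h i _ hu _ hu' hne
    have h1' : v.1 i = x := by simpa using h1
    have h2' : v'.1 i = y := by simpa using h2
    refine ⟨v.1, ?_⟩
    have e1 : Function.update v.1 i x = v.1 := by
      funext k
      rcases eq_or_ne k i with rfl | hk
      · simp [Function.update_self, h1']
      · simp [Function.update_of_ne hk]
    have e2 : Function.update v.1 i y = v'.1 := by
      funext k
      rcases eq_or_ne k i with rfl | hk
      · simp [Function.update_self, h2']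
      · simp [Function.update_of_ne hk, h3 k hk]
    rw [e1, e2]
    have hv2 : v.2 = f v.1 := hv
    have hv'2 : v'.2 = f v'.1 := hv'
    intro hc; exact h4 (by rw [hv2, hv'2, hc])
  · intro h i u hu u' hu' hne
    obtain ⟨z, hz⟩ := h i (u.1 i) (u'.1 i) hne
    exact ⟨(Function.update z i (u.1 i), f (Function.update z i (u.1 i))), rfl,
      (Function.update z i (u'.1 i), f (Function.update z i (u'.1 i))), rfl,
      by simp, by simp, fun k hk => by simp [Function.update_of_ne hk], hz⟩
end

section
/- Assume the input type In is nonempty and f : In → O is distributed data-minimal. Then no finite set U ⊆ graph f permanently violates φ_dm in Sys f: for every finite U ⊆ graph f there exists a B with U ⊆ B ⊆ graph f (namely graph f itself) that satisfies φ_dm. -/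
theorem ddm_no_graybox_perm_violation
    {n : ℕ} {I : Fin n → Type*} {O : Type*}
    (hn : 1 ≤ n) [Nonempty (∀ k, I k)]
    (f : (∀ k, I k) → O) (hf : DDM f) :
    ∀ U : Set ((∀ k, I k) × O), U.Finite → U ⊆ graphOf f →
      ∃ B : Set ((∀ k, I k) × O), U ⊆ B ∧ B ⊆ graphOf f ∧ PhiDM B := by
  intro U _ hU
  refine ⟨graphOf f, hU, le_refl _, ?_⟩
  intro i u hu u' hu' hne
  obtain ⟨z, hz⟩ := hf i (u.1 i) (u'.1 i) hne
  refine ⟨(Function.update z i (u.1 i), f (Function.update z i (u.1 i))), rfl,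
    (Function.update z i (u'.1 i), f (Function.update z i (u'.1 i))), rfl,
    Function.update_self .., Function.update_self .., ?_, hz⟩
  intro k hk
  simp [Function.update_of_ne hk]
end

section
/- Assume the input type In is finite and nonempty, and let f : In → O. Then the graph of f is a finite observation that either permanently satisfies φ_dm in Sys f (exactly when f is distributed data-minimal) or permanently violates φ_dm in Sys f (exactly when f is not distributed data-minimal). Consequently, every finite U ⊆ graph f has a finite extension V with U ⊆ V ⊆ graph f that permanently satisfies or permanently violates φ_dm in Sys f. -/
lemma phiDM_graph_iff {n : ℕ} {I : Fin n → Type*} {O : Type*}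
    [Nonempty (∀ k, I k)] (f : (∀ k, I k) → O) :
    PhiDM (graphOf f) ↔ DDM f := by
  constructor
  · intro h i x y hxy
    obtain ⟨z⟩ := (inferInstance : Nonempty (∀ k, I k))
    have hu : (Function.update z i x, f (Function.update z i x)) ∈ graphOf f := rfl
    have hu' : (Function.update z i y, f (Function.update z i y)) ∈ graphOf f := rfl
    obtain ⟨v, hv, v', hv', h1, h2, h3, h4⟩ := h i _ hu _ hu' (by
      simpa [Function.update_self] using hxy)
    simp only [Function.update_self] at h1 h2
    refine ⟨v'.1, ?_⟩
    have e1 : Function.update v'.1 i x = v.1 := by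
      funext k
      rcases eq_or_ne k i with rfl | hk
      · simp [h1]
      · simp [Function.update_of_ne hk, (h3 k hk).symm]
    have e2 : Function.update v'.1 i y = v'.1 := by
      funext k
      rcases eq_or_ne k i with rfl | hk
      · simp [h2]
      · simp [Function.update_of_ne hk]
    rw [e1, e2, ← hv, ← hv']
    exact h4
  · intro h i u hu u' hu' hne
    obtain ⟨z, hz⟩ := h i (u.1 i) (u'.1 i) hne
    refine ⟨(Function.update z i (u.1 i), f _), rfl,
      (Function.update z i (u'.1 i), f _), rfl, ?_, ?_, ?_, hz⟩
    · simp
    · simp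
    · intro k hk; simp [Function.update_of_ne hk]

theorem finite_input_graph_is_deciding_observation
    {n : ℕ} {I : Fin n → Type*} {O : Type*}
    (hn : 1 ≤ n) [Finite (∀ k, I k)] [Nonempty (∀ k, I k)]
    (f : (∀ k, I k) → O) :
    (graphOf f).Finite ∧
      ((∀ B : Set ((∀ k, I k) × O), graphOf f ⊆ B → B ⊆ graphOf f → PhiDM B)
        ↔ DDM f) ∧
      ((∀ B : Set ((∀ k, I k) × O), graphOf f ⊆ B → B ⊆ graphOf f → ¬ PhiDM B)
        ↔ ¬ DDM f) ∧
      (∀ U : Set ((∀ k, I k) × O), U.Finite → U ⊆ graphOf f →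
        ∃ V : Set ((∀ k, I k) × O), U ⊆ V ∧ V ⊆ graphOf f ∧ V.Finite ∧
          ((∀ B : Set ((∀ k, I k) × O), V ⊆ B → B ⊆ graphOf f → PhiDM B) ∨
           (∀ B : Set ((∀ k, I k) × O), V ⊆ B → B ⊆ graphOf f → ¬ PhiDM B))) := by
  have hgr : graphOf f = Set.range (fun x => (x, f x)) := by
    ext p; constructor
    · intro hp; exact ⟨p.1, by simp [graphOf] at hp; exact Prod.ext rfl hp.symm⟩
    · rintro ⟨x, rfl⟩; rfl
  have hfin : (graphOf f).Finite := by rw [hgr]; exact Set.finite_range _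
  have key : ∀ B : Set ((∀ k, I k) × O), graphOf f ⊆ B → B ⊆ graphOf f →
      B = graphOf f := fun B h1 h2 => le_antisymm h2 h1
  refine ⟨hfin, ?_, ?_, ?_⟩
  · constructor
    · intro h; exact (phiDM_graph_iff f).mp (h _ le_rfl le_rfl)
    · intro h B h1 h2; rw [key B h1 h2]; exact (phiDM_graph_iff f).mpr h
  · constructor
    · intro h hd; exact h _ le_rfl le_rfl ((phiDM_graph_iff f).mpr hd)
    · intro h B h1 h2 hp; rw [key B h1 h2] at hp
      exact h ((phiDM_graph_iff f).mp hp)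
  · intro U hU hUg
    refine ⟨graphOf f, hUg, le_rfl, hfin, ?_⟩
    rcases Classical.em (DDM f) with hd | hd
    · left; intro B h1 h2; rw [key B h1 h2]; exact (phiDM_graph_iff f).mpr hd
    · right; intro B h1 h2 hp; rw [key B h1 h2] at hp
      exact hd ((phiDM_graph_iff f).mp hp)
end

section
/- Let f : I → O be a function between arbitrary types. The identity function is a minimizer for f — that is, every preprocessor of f is injective — if and only if f is injective. (Equivalently: f is monolithic data-minimal iff f is injective.) -/
/-- The identity is a minimizer for `f` (i.e., every preprocessor of `f` is
injective) if and only if `f` is injective. -/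
theorem identity_minimizer_iff_injective {I O : Type*} (f : I → O) :
    (∀ p : I → I, f ∘ p = f → p ∘ p = p → Function.Injective p)
      ↔ Function.Injective f := by
  classical
  constructor
  · intro h x y hxy
    set p : I → I := fun z => if z = y then x else z with hp
    have hfp : f ∘ p = f := by
      funext z
      simp only [hp, Function.comp]
      split <;> simp_all
    have hpp : p ∘ p = p := by
      funext z
      simp only [hp, Function.comp]
      split <;> simp_all
    have := h p hfp hpp (a₁ := x) (a₂ := y)
    simp only [hp] at this
    by_cases hx : x = y
    · exact hx
    · exact this (by simp [hx])
  · intro hf p hfp _ a b hab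
    have : f a = f b := by
      rw [← congrFun hfp a, ← congrFun hfp b, Function.comp, Function.comp, hab]
    exact hf this
end
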